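/- arXiv:1712.09796 — 5 statements merged into one kernel-verified Lean document; each statement's English description precedes it below -/
import Mathlib

section
/- For every r > 0 and ω > 0, the set PSAP_{ω,r}(X) is a closed subspace of C_b([0,∞),X) with respect to the norm of uniform convergence; in particular, if a sequence (u_n) in PSAP_{ω,r}(X) converges uniformly on [0,∞) to u ∈ C_b([0,∞),X), then u ∈ PSAP_{ω,r}(X). -/
/-!
If `‖v - u_N‖ < ε / 2` on `[0, ∞)`, then `‖v(τ + ω) - v(τ)‖ ≤ ‖u_N(τ + ω) - u_N(τ)‖ + ε`, hence the
same bound holds for the suprema over the windows `[s - r, s]`, and, since `(T - r) / T ≤ 1`, for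
their averages over `[r, T]`; the averages for `u_N` tend to `0`. Comparing the integrals needs the
window supremum for `u_N` to be integrable (a Bochner integral of a non-integrable function is `0`):
it is continuous, as the supremum of a continuous function over a compact window moving continuously.
-/
open MeasureTheory Filter Set

/-- `u ∈ PSAP_{ω,r}(X)`: pseudo S-asymptotically ω-periodic of class r. -/
def PSAPclass {X : Type*} [NormedAddCommGroup X] (ω r : ℝ) (u : ℝ → X) : Prop :=
  Tendsto (fun T : ℝ => (1 / T) * ∫ s in r..T, ⨆ τ ∈ Set.Icc (s - r) s, ‖u (τ + ω) - u τ‖)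
    atTop (nhds 0)

noncomputable def windowSup (g : ℝ → ℝ) (r s : ℝ) : ℝ := ⨆ τ ∈ Icc (s - r) s, g τ

lemma Icc_sub_subset_Ici_zero {r s : ℝ} (hs : r ≤ s) : Icc (s - r) s ⊆ Ici 0 :=
  fun _ hτ => (sub_nonneg.2 hs).trans hτ.1

section WindowSup

variable {f g : ℝ → ℝ} {r s : ℝ}

lemma Real.biSup_eq_sSup_image_of_nonneg {S : Set ℝ} (hbdd : BddAbove (g '' S))
    (hg0 : ∀ τ ∈ S, 0 ≤ g τ) : ⨆ τ ∈ S, g τ = sSup (g '' S) := by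
  refine (csSup_image ?_ ?_).symm
  · rwa [← image_eq_range]
  · rw [Real.sSup_empty]
    exact Real.iSup_nonneg fun τ => hg0 τ τ.2

lemma windowSup_nonneg (hg0 : ∀ τ ∈ Icc (s - r) s, 0 ≤ g τ) : 0 ≤ windowSup g r s :=
  Real.iSup_nonneg fun τ => Real.iSup_nonneg fun hτ => hg0 τ hτ

lemma le_windowSup (hbdd : BddAbove (g '' Icc (s - r) s)) (hg0 : ∀ τ ∈ Icc (s - r) s, 0 ≤ g τ)
    {τ : ℝ} (hτ : τ ∈ Icc (s - r) s) : g τ ≤ windowSup g r s := by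
  rw [windowSup, Real.biSup_eq_sSup_image_of_nonneg hbdd hg0]
  exact le_csSup hbdd (mem_image_of_mem g hτ)

lemma windowSup_le_add {c : ℝ} (hc : 0 ≤ c) (hbdd : BddAbove (g '' Icc (s - r) s))
    (hg0 : ∀ τ ∈ Icc (s - r) s, 0 ≤ g τ) (hfg : ∀ τ ∈ Icc (s - r) s, f τ ≤ g τ + c) :
    windowSup f r s ≤ windowSup g r s + c := by
  have hsum_nonneg : 0 ≤ windowSup g r s + c := add_nonneg (windowSup_nonneg hg0) hc
  refine Real.iSup_le (fun τ => Real.iSup_le (fun hτ => ?_) hsum_nonneg) hsum_nonneg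
  linarith [hfg τ hτ, le_windowSup hbdd hg0 hτ]

/-- The window `[s - r, s]` is the image of `[0, r]` under `θ ↦ s - θ`, and for `s ≥ r` it lies in
`[0, ∞)`, where `g` agrees with the continuous function `g ∘ max 0`; so continuity follows from
`IsCompact.continuous_sSup`. -/
lemma continuousOn_windowSup (hg : ContinuousOn g (Ici 0)) (hg0 : ∀ t ≥ 0, 0 ≤ g t) :
    ContinuousOn (windowSup g r) (Ici r) := by
  set g' : ℝ → ℝ := g ∘ fun t => max t 0
  have hg' : Continuous g' :=
    hg.comp_continuous (continuous_id.max continuous_const) fun t => le_max_right t 0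
  have hsup : Continuous fun s => sSup ((fun s θ => g' (s - θ)) s '' Icc 0 r) :=
    isCompact_Icc.continuous_sSup (hg'.comp (continuous_fst.sub continuous_snd))
  refine hsup.continuousOn.congr fun s (hs : r ≤ s) => ?_
  have hwindow := Icc_sub_subset_Ici_zero hs
  have hbdd : BddAbove (g '' Icc (s - r) s) := isCompact_Icc.bddAbove_image (hg.mono hwindow)
  rw [windowSup, Real.biSup_eq_sSup_image_of_nonneg hbdd fun τ hτ => hg0 τ (hwindow hτ)]
  have hreflect : Icc (s - r) s = (fun θ => s - θ) '' Icc 0 r := by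
    rw [image_const_sub_Icc, sub_zero]
  congr 1
  rw [hreflect, image_image]
  refine image_congr fun θ hθ => ?_
  simp only [g', Function.comp_apply, max_eq_left (by linarith [hθ.2] : 0 ≤ s - θ)]

end WindowSup

lemma tendsto_average_of_forall_le_add {F : ℝ → ℝ} {r : ℝ} (hr : 0 ≤ r)
    (hF0 : ∀ s ≥ r, 0 ≤ F s)
    (happrox : ∀ ε > 0, ∃ G : ℝ → ℝ, (∀ T ≥ r, IntervalIntegrable G volume r T) ∧
      (∀ s ≥ r, F s ≤ G s + ε) ∧
      Tendsto (fun T => (1 / T) * ∫ s in r..T, G s) atTop (nhds 0)) :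
    Tendsto (fun T => (1 / T) * ∫ s in r..T, F s) atTop (nhds 0) := by
  refine Metric.tendsto_nhds.2 fun ε hε => ?_
  obtain ⟨G, hGint, hFG, hGlim⟩ := happrox (ε / 2) (half_pos hε)
  filter_upwards [Metric.tendsto_nhds.1 hGlim (ε / 2) (half_pos hε),
    eventually_ge_atTop (max r 1)] with T hGT hT
  have hrT : r ≤ T := le_of_max_le_left hT
  have hT0 : 0 < T := one_pos.trans_le (le_of_max_le_right hT)
  have hint_nonneg : 0 ≤ ∫ s in r..T, F s :=
    intervalIntegral.integral_nonneg hrT fun s hs => hF0 s hs.1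
  have hint_le : ∫ s in r..T, F s ≤ (∫ s in r..T, G s) + ε / 2 * (T - r) := calc
    ∫ s in r..T, F s ≤ ∫ s in r..T, (G s + ε / 2) := by
      rw [intervalIntegral.integral_of_le hrT, intervalIntegral.integral_of_le hrT]
      refine integral_mono_of_nonneg ?_
        ((hGint T hrT).1.add (integrableOn_const measure_Ioc_lt_top.ne)) ?_
      · exact (ae_restrict_iff' measurableSet_Ioc).2 (.of_forall fun s hs => hF0 s hs.1.le)
      · exact (ae_restrict_iff' measurableSet_Ioc).2 (.of_forall fun s hs => hFG s hs.1.le)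
    _ = (∫ s in r..T, G s) + ε / 2 * (T - r) := by
      rw [intervalIntegral.integral_add (hGint T hrT) intervalIntegrable_const,
        intervalIntegral.integral_const, smul_eq_mul, mul_comm]
  rw [Real.dist_eq, sub_zero] at hGT ⊢
  have hfrac : (1 / T) * (T - r) ≤ 1 := by
    rw [one_div, inv_mul_le_iff₀ hT0]
    linarith
  rw [abs_of_nonneg (mul_nonneg (by positivity) hint_nonneg)]
  calc (1 / T) * ∫ s in r..T, F s
      ≤ (1 / T) * ((∫ s in r..T, G s) + ε / 2 * (T - r)) := by gcongr
    _ = (1 / T) * (∫ s in r..T, G s) + ε / 2 * ((1 / T) * (T - r)) := by ring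
    _ < ε / 2 + ε / 2 * 1 :=
        add_lt_add_of_lt_of_le ((le_abs_self _).trans_lt hGT) (by gcongr)
    _ = ε := by ring

lemma continuousOn_norm_shift_sub {X : Type*} [NormedAddCommGroup X] {u : ℝ → X} {ω : ℝ}
    (hu : ContinuousOn u (Ici 0)) (hω : 0 ≤ ω) :
    ContinuousOn (fun τ => ‖u (τ + ω) - u τ‖) (Ici 0) := by
  have hshift : ContinuousOn (fun τ => u (τ + ω)) (Ici 0) :=
    hu.comp (continuous_add_const ω).continuousOn fun τ (hτ : 0 ≤ τ) => add_nonneg hτ hω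
  exact (hshift.sub hu).norm

theorem psapClass_closed_general {X : Type*} [NormedAddCommGroup X]
    (r ω : ℝ) (hr : 0 < r) (hω : 0 < ω)
    (u : ℕ → ℝ → X) (v : ℝ → X)
    (hucont : ∀ n, ContinuousOn (u n) (Set.Ici 0))
    (huP : ∀ n, PSAPclass ω r (u n))
    (hconv : TendstoUniformlyOn u v atTop (Set.Ici 0)) :
    PSAPclass ω r v := by
  refine tendsto_average_of_forall_le_add hr.le
    (fun s _ => windowSup_nonneg fun τ _ => norm_nonneg _) fun ε hε => ?_
  obtain ⟨N, hN⟩ := (Metric.tendstoUniformlyOn_iff.1 hconv (ε / 2) (half_pos hε)).exists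
  have hGcont := continuousOn_norm_shift_sub (hucont N) hω.le
  refine ⟨windowSup (fun τ => ‖u N (τ + ω) - u N τ‖) r, fun T hT => ?_, fun s hs => ?_, huP N⟩
  · exact ((continuousOn_windowSup hGcont fun _ _ => norm_nonneg _).mono
      Icc_subset_Ici_self).intervalIntegrable_of_Icc hT
  · have hwindow := Icc_sub_subset_Ici_zero hs
    refine windowSup_le_add hε.le (isCompact_Icc.bddAbove_image (hGcont.mono hwindow))
      (fun _ _ => norm_nonneg _) fun τ hτ => ?_
    have hτ0 : 0 ≤ τ := hwindow hτ
    have h₁ := hN (τ + ω) (add_nonneg hτ0 hω.le)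
    have h₂ := hN τ hτ0
    rw [← dist_eq_norm, ← dist_eq_norm]
    linarith [dist_triangle4 (v (τ + ω)) (u N (τ + ω)) (u N τ) (v τ), dist_comm (u N τ) (v τ),
      dist_comm (u N (τ + ω)) (v (τ + ω))]

/-- `PSAP_{ω,r}(X)` is closed in `C_b([0,∞),X)` under uniform convergence. -/
theorem psapClass_closed {X : Type*} [NormedAddCommGroup X]
    (r ω : ℝ) (hr : 0 < r) (hω : 0 < ω)
    (u : ℕ → ℝ → X) (v : ℝ → X)
    (hucont : ∀ n, ContinuousOn (u n) (Set.Ici 0))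
    (hubdd : ∀ n, ∃ B, ∀ t ≥ (0:ℝ), ‖u n t‖ ≤ B)
    (huP : ∀ n, PSAPclass ω r (u n))
    (hvcont : ContinuousOn v (Set.Ici 0))
    (hvbdd : ∃ B, ∀ t ≥ (0:ℝ), ‖v t‖ ≤ B)
    (hconv : TendstoUniformlyOn u v atTop (Set.Ici 0)) :
    PSAPclass ω r v :=
  psapClass_closed_general r ω hr hω u v hucont huP hconv
end

section
/- The space PSAP_{ω,r}(X) is translation invariant on ℝ⁺: if u ∈ PSAP_{ω,r}(X) and s ≥ 0, then the function ρ ↦ u(ρ + s) also belongs to PSAP_{ω,r}(X). -/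
/-!
Reindexing `τ ↦ τ + s` shows that the integrand of the shifted function at `σ` is the integrand
of `u` at `σ + s`. Hence the shifted mean over `[r, T]` is the mean of `u` over `[r, T + s]`,
rescaled by `(T + s) / T → 1`, minus the fixed integral over `[r, r + s]` divided by `T`.
Replacing `u` by `t ↦ u (max t 0)` changes nothing on `[0, ∞)` and makes the integrand
continuous, hence locally integrable.
-/

open MeasureTheory Filter Set

open Topology

theorem biSup_Icc_comp_add_right {α : Type*} [SupSet α] (f : ℝ → α) (a b s : ℝ) :
    ⨆ τ ∈ Icc a b, f (τ + s) = ⨆ τ ∈ Icc (a + s) (b + s), f τ := by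
  rw [← (Equiv.addRight s).iSup_comp (g := fun τ => ⨆ _ : τ ∈ Icc (a + s) (b + s), f τ)]
  simp only [Equiv.coe_addRight, add_mem_Icc_iff_left, add_sub_cancel_right]

/- In `ℝ` a bounded supremum `⨆ τ ∈ S, g τ` also ranges over the junk value `sSup ∅ = 0`, so it is
`sSup (g '' S)` only for nonnegative `g`. -/
theorem Continuous.biSup_Icc_sub {g : ℝ → ℝ} (hg : Continuous g) (hg₀ : ∀ t, 0 ≤ g t) (r : ℝ) :
    Continuous fun σ => ⨆ τ ∈ Icc (σ - r) σ, g τ := by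
  have hsup : ∀ σ, ⨆ τ ∈ Icc (σ - r) σ, g τ = sSup ((fun p => g (p + σ)) '' Icc (-r) 0) := by
    intro σ
    have hbdd : BddAbove (range fun p : Icc (-r) 0 => g (p + σ)) := by
      rw [← image_eq_range (fun p => g (p + σ))]
      exact isCompact_Icc.bddAbove_image (by fun_prop)
    rw [csSup_image hbdd (Real.sSup_empty ▸ Real.iSup_nonneg fun _ => hg₀ _),
      biSup_Icc_comp_add_right, neg_add_eq_sub, zero_add]
  simp_rw [hsup]
  exact isCompact_Icc.continuous_sSup (f := fun σ p => g (p + σ)) (by fun_prop)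

theorem tendsto_inv_mul_comp_add_right {f : ℝ → ℝ} (s : ℝ)
    (hf : Tendsto (fun T => (1 / T) * f T) atTop (𝓝 0)) :
    Tendsto (fun T => (1 / T) * f (T + s)) atTop (𝓝 0) := by
  have hratio : Tendsto (fun T : ℝ => 1 + s / T) atTop (𝓝 1) := by
    simpa using tendsto_const_nhds.add ((tendsto_const_nhds (x := s)).div_atTop tendsto_id)
  have hprod := hratio.mul (hf.comp (tendsto_atTop_add_const_right atTop s tendsto_id))
  rw [mul_zero] at hprod
  refine hprod.congr' ?_
  filter_upwards [eventually_gt_atTop 0, eventually_gt_atTop (-s)] with T hT hTs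
  have hTs₀ : T + s ≠ 0 := by linarith
  simp only [Function.comp_apply, id]
  field_simp

theorem tendsto_inv_mul_integral_comp_add_right {F : ℝ → ℝ} {r : ℝ} (s : ℝ)
    (hF : ∀ T, IntervalIntegrable F volume r T)
    (h : Tendsto (fun T => (1 / T) * ∫ σ in r..T, F σ) atTop (𝓝 0)) :
    Tendsto (fun T => (1 / T) * ∫ σ in r..T, F (σ + s)) atTop (𝓝 0) := by
  have hsplit : ∀ T, ∫ σ in r..T, F (σ + s) = (∫ σ in r..T + s, F σ) - ∫ σ in r..r + s, F σ :=
    fun T => by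
      rw [intervalIntegral.integral_comp_add_right,
        intervalIntegral.integral_interval_sub_left (hF _) (hF _)]
  simp_rw [hsplit, mul_sub]
  simpa using (tendsto_inv_mul_comp_add_right s h).sub
    ((tendsto_inv_atTop_zero (𝕜 := ℝ)).mul_const (∫ σ in r..r + s, F σ))

theorem psapClass_iff_of_eqOn {X : Type*} [NormedAddCommGroup X] {ω r : ℝ} {u v : ℝ → X}
    (hω : 0 ≤ ω) (huv : EqOn u v (Ici 0)) : PSAPclass ω r u ↔ PSAPclass ω r v := by
  refine tendsto_congr' ?_
  filter_upwards [eventually_ge_atTop r] with T hT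
  congr 1
  refine intervalIntegral.integral_congr fun σ hσ => biSup_congr fun τ hτ => ?_
  rw [uIcc_of_le hT] at hσ
  have hτ₀ : 0 ≤ τ := by linarith [hσ.1, hτ.1]
  rw [huv hτ₀, huv (show 0 ≤ τ + ω by linarith)]

theorem PSAPclass.comp_add_right {X : Type*} [NormedAddCommGroup X] {ω r : ℝ} {u : ℝ → X}
    (hu : Continuous u) (h : PSAPclass ω r u) (s : ℝ) :
    PSAPclass ω r fun ρ => u (ρ + s) := by
  have hM : Continuous fun σ => ⨆ τ ∈ Icc (σ - r) σ, ‖u (τ + ω) - u τ‖ :=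
    Continuous.biSup_Icc_sub (by fun_prop) (fun _ => norm_nonneg _) r
  have hshift : ∀ σ, ⨆ τ ∈ Icc (σ - r) σ, ‖u (τ + s + ω) - u (τ + s)‖ =
      ⨆ τ ∈ Icc (σ + s - r) (σ + s), ‖u (τ + ω) - u τ‖ := fun σ => by
    rw [add_sub_right_comm, ← biSup_Icc_comp_add_right (fun τ => ‖u (τ + ω) - u τ‖)]
  unfold PSAPclass
  simp_rw [add_right_comm _ ω s, hshift]
  exact tendsto_inv_mul_integral_comp_add_right s (fun T => hM.intervalIntegrable r T) h

theorem psapClass_translation_invariant_general {X : Type*} [NormedAddCommGroup X]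
    (r ω s : ℝ) (hω : 0 < ω) (hs : 0 ≤ s)
    (u : ℝ → X)
    (hcont : ContinuousOn u (Set.Ici 0))
    (h : PSAPclass ω r u) :
    PSAPclass ω r (fun ρ => u (ρ + s)) := by
  set v : ℝ → X := fun t => u (max t 0)
  have hv : Continuous v :=
    hcont.comp_continuous (by fun_prop) fun t => le_max_right t 0
  have hvu : EqOn v u (Ici 0) := fun t ht => by simp only [v, max_eq_left (mem_Ici.1 ht)]
  have hv_shift : EqOn (fun ρ => v (ρ + s)) (fun ρ => u (ρ + s)) (Ici 0) :=
    fun t ht => hvu (show 0 ≤ t + s by linarith [mem_Ici.1 ht])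
  exact (psapClass_iff_of_eqOn hω.le hv_shift).1
    (((psapClass_iff_of_eqOn hω.le hvu).2 h).comp_add_right hv s)

/-- Lemma 2.2: `PSAP_{ω,r}(X)` is translation invariant on ℝ⁺. -/
theorem psapClass_translation_invariant {X : Type*} [NormedAddCommGroup X]
    (r ω s : ℝ) (hr : 0 < r) (hω : 0 < ω) (hs : 0 ≤ s)
    (u : ℝ → X)
    (hcont : ContinuousOn u (Set.Ici 0)) (hbdd : ∃ B, ∀ t ≥ (0:ℝ), ‖u t‖ ≤ B)
    (h : PSAPclass ω r u) :
    PSAPclass ω r (fun ρ => u (ρ + s)) :=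
  psapClass_translation_invariant_general r ω s hω hs u hcont h
end

section
/- A function u ∈ C_b([0,∞),X) is pseudo S-asymptotically ω-periodic if and only if for each ε > 0 the set C_ε = {t ∈ [0,∞) : ‖u(t+ω)−u(t)‖ ≥ ε} is an ergodic zero set, i.e. lim_{r→∞} mes(Q_r ∩ C_ε)/mes(Q_r) = 0 where Q_r = [−r,r] and mes denotes the Lebesgue measure. -/
/-!
Write `g(s) = ‖u(s + ω) - u(s)‖`, a bounded nonnegative function continuous on `[0, ∞)`.
Chebyshev's inequality gives `ε · mes([0, t] ∩ C_ε) ≤ ∫₀ᵗ g`, so vanishing means force the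
level sets `C_ε` to have density zero. Conversely, splitting `[0, t]` into `C_ε` and its
complement gives `∫₀ᵗ g ≤ M · mes([0, t] ∩ C_ε) + ε t` for a bound `M` of `g`, so densities
zero force the means below `2ε` eventually. Since `C_ε ⊆ [0, ∞)`, its density in `[-R, R]` is
half its density in `[0, R]`.
-/

open MeasureTheory Filter Set

/-- `f ∈ PSAP_ω(X)`: pseudo S-asymptotically ω-periodic. -/
def PSAP {X : Type*} [NormedAddCommGroup X] (ω : ℝ) (f : ℝ → X) : Prop :=
  Tendsto (fun t : ℝ => (1 / t) * ∫ s in (0:ℝ)..t, ‖f (s + ω) - f s‖) atTop (nhds 0)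

/-- `Ω` is an ergodic zero set: `mes(Q_R ∩ Ω)/mes(Q_R) → 0` as `R → ∞`, `Q_R = [-R,R]`. -/
def ErgodicZeroSet (Ω : Set ℝ) : Prop :=
  Tendsto (fun R : ℝ =>
      (volume (Set.Icc (-R) R ∩ Ω)).toReal / (volume (Set.Icc (-R) R)).toReal)
    atTop (nhds 0)

open scoped Topology

section LevelSet

variable {α : Type*} [MeasurableSpace α] {μ : Measure α} {S : Set α} {g : α → ℝ}

theorem mul_measureReal_inter_levelSet_le_setIntegral (hS : MeasurableSet S)
    (hg0 : ∀ x ∈ S, 0 ≤ g x) (hint : IntegrableOn g S μ) (ε : ℝ) :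
    ε * μ.real (S ∩ {x | ε ≤ g x}) ≤ ∫ x in S, g x ∂μ := by
  have := mul_meas_ge_le_integral_of_nonneg (ae_restrict_of_forall_mem hS hg0) hint ε
  rwa [measureReal_restrict_apply' hS, inter_comm] at this

theorem setIntegral_le_mul_measureReal_inter_levelSet_add {M ε : ℝ} (hε : 0 ≤ ε)
    (hS : MeasurableSet S) (hμS : μ S ≠ ⊤) (hL : MeasurableSet (S ∩ {x | ε ≤ g x}))
    (hint : IntegrableOn g S μ) (hgM : ∀ x ∈ S, g x ≤ M) :
    ∫ x in S, g x ∂μ ≤ M * μ.real (S ∩ {x | ε ≤ g x}) + ε * μ.real S := by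
  set L := S ∩ {x | ε ≤ g x}
  have hLS : L ⊆ S := inter_subset_left
  have hfin : ∀ T ⊆ S, μ T ≠ ⊤ := fun T hT => ne_top_of_le_ne_top hμS (measure_mono hT)
  have hle_L : ∫ x in L, g x ∂μ ≤ ∫ _ in L, M ∂μ :=
    setIntegral_mono_on (hint.mono_set hLS) (integrableOn_const (hfin L hLS)) hL
      fun x hx => hgM x hx.1
  have hle_rest : ∫ x in S \ L, g x ∂μ ≤ ∫ _ in S \ L, ε ∂μ :=
    setIntegral_mono_on (hint.mono_set sdiff_subset) (integrableOn_const (hfin _ sdiff_subset))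
      (hS.diff hL) fun x hx => (not_le.1 fun h => hx.2 ⟨hx.1, h⟩).le
  have hrest_le : μ.real (S \ L) ≤ μ.real S := measureReal_mono sdiff_subset hμS
  rw [← integral_inter_add_sdiff hL hint, inter_eq_right.2 hLS]
  rw [setIntegral_const, smul_eq_mul] at hle_L hle_rest
  linarith [mul_le_mul_of_nonneg_left hrest_le hε]

end LevelSet

theorem ergodicZeroSet_Ici_inter_iff (A : Set ℝ) :
    ErgodicZeroSet (Ici 0 ∩ A) ↔
      Tendsto (fun R => volume.real (Icc 0 R ∩ A) / R) atTop (𝓝 0) := by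
  have hhalf : (fun R => volume.real (Icc (-R) R ∩ (Ici 0 ∩ A)) / volume.real (Icc (-R) R))
      =ᶠ[atTop] fun R => 2⁻¹ * (volume.real (Icc 0 R ∩ A) / R) := by
    filter_upwards [eventually_ge_atTop 0] with R hR
    have hset : Icc (-R) R ∩ (Ici 0 ∩ A) = Icc 0 R ∩ A := by
      ext x
      simp only [mem_inter_iff, mem_Icc, mem_Ici]
      grind
    rw [hset, Real.volume_real_Icc_of_le (by linarith)]
    field_simp
    ring
  unfold ErgodicZeroSet
  simp only [← measureReal_def]
  rw [tendsto_congr' hhalf]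
  exact ⟨fun h => by simpa using h.const_mul 2, fun h => by simpa using h.const_mul 2⁻¹⟩

section Average

variable {g : ℝ → ℝ}

theorem tendsto_density_levelSet_of_tendsto_average (hg0 : ∀ x, 0 ≤ x → 0 ≤ g x)
    (hint : ∀ t, IntegrableOn g (Icc 0 t))
    (h : Tendsto (fun t => t⁻¹ * ∫ s in Icc 0 t, g s) atTop (𝓝 0)) {ε : ℝ} (hε : 0 < ε) :
    Tendsto (fun t => volume.real (Icc 0 t ∩ {s | ε ≤ g s}) / t) atTop (𝓝 0) := by
  have hupper := h.const_mul ε⁻¹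
  rw [mul_zero] at hupper
  refine tendsto_of_tendsto_of_tendsto_of_le_of_le' tendsto_const_nhds hupper ?_ ?_
  · filter_upwards [eventually_ge_atTop 0] with t ht
    positivity
  · filter_upwards [eventually_gt_atTop 0] with t ht
    have hcheb : volume.real (Icc 0 t ∩ {s | ε ≤ g s}) ≤ ε⁻¹ * ∫ s in Icc 0 t, g s := by
      rw [le_inv_mul_iff₀ hε]
      exact mul_measureReal_inter_levelSet_le_setIntegral measurableSet_Icc
        (fun x hx => hg0 x hx.1) (hint t) ε
    calc volume.real (Icc 0 t ∩ {s | ε ≤ g s}) / t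
        ≤ (ε⁻¹ * ∫ s in Icc 0 t, g s) / t := by gcongr
      _ = ε⁻¹ * (t⁻¹ * ∫ s in Icc 0 t, g s) := by ring

theorem tendsto_average_of_tendsto_density_levelSet {M : ℝ} (hg0 : ∀ x, 0 ≤ x → 0 ≤ g x)
    (hgM : ∀ x, 0 ≤ x → g x ≤ M) (hint : ∀ t, IntegrableOn g (Icc 0 t))
    (hL : ∀ ε t, MeasurableSet (Icc 0 t ∩ {s | ε ≤ g s}))
    (h : ∀ ε > 0, Tendsto (fun t => volume.real (Icc 0 t ∩ {s | ε ≤ g s}) / t) atTop (𝓝 0)) :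
    Tendsto (fun t => t⁻¹ * ∫ s in Icc 0 t, g s) atTop (𝓝 0) := by
  rw [Metric.tendsto_nhds]
  intro ε hε
  set M' := |M| + 1
  have hM' : 0 < M' := by positivity
  have hsmall := (h (ε / 2) (by positivity)).eventually_lt_const
    (show 0 < ε / 2 / M' by positivity)
  filter_upwards [hsmall, eventually_gt_atTop 0] with t hdensity ht
  have hbound := setIntegral_le_mul_measureReal_inter_levelSet_add (μ := volume)
    (M := M') (by positivity) measurableSet_Icc measure_Icc_lt_top.ne (hL (ε / 2) t) (hint t)
    fun x hx => (hgM x hx.1).trans ((le_abs_self M).trans (lt_add_one _).le)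
  rw [Real.volume_real_Icc_of_le ht.le, sub_zero] at hbound
  rw [div_lt_iff₀ ht] at hdensity
  have hnonneg : 0 ≤ ∫ s in Icc 0 t, g s :=
    setIntegral_nonneg measurableSet_Icc fun x hx => hg0 x hx.1
  rw [Real.dist_eq, sub_zero, abs_of_nonneg (by positivity), inv_mul_lt_iff₀ ht]
  calc ∫ s in Icc 0 t, g s
      ≤ M' * volume.real (Icc 0 t ∩ {s | ε / 2 ≤ g s}) + ε / 2 * t := hbound
    _ < M' * (ε / 2 / M' * t) + ε / 2 * t := by gcongr
    _ = t * ε := by field_simp; ring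

end Average

theorem tendsto_average_iff_ergodicZeroSet {g : ℝ → ℝ} {M : ℝ} (hcont : ContinuousOn g (Ici 0))
    (hg0 : ∀ x, 0 ≤ x → 0 ≤ g x) (hgM : ∀ x, 0 ≤ x → g x ≤ M) :
    Tendsto (fun t => 1 / t * ∫ s in (0 : ℝ)..t, g s) atTop (𝓝 0) ↔
      ∀ ε > 0, ErgodicZeroSet {t | 0 ≤ t ∧ ε ≤ g t} := by
  have haverage : (fun t => t⁻¹ * ∫ s in Icc 0 t, g s)
      =ᶠ[atTop] fun t => 1 / t * ∫ s in (0 : ℝ)..t, g s := by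
    filter_upwards [eventually_ge_atTop 0] with t ht
    rw [intervalIntegral.integral_of_le ht, integral_Icc_eq_integral_Ioc, one_div]
  have hcont_Icc (t : ℝ) : ContinuousOn g (Icc 0 t) := hcont.mono Icc_subset_Ici_self
  have hint (t : ℝ) : IntegrableOn g (Icc 0 t) := (hcont_Icc t).integrableOn_Icc
  have hL (ε t : ℝ) : MeasurableSet (Icc 0 t ∩ {s | ε ≤ g s}) :=
    ((hcont_Icc t).preimage_isClosed_of_isClosed isClosed_Icc isClosed_Ici).measurableSet
  simp only [← tendsto_congr' haverage, gt_iff_lt]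
  exact ⟨fun h ε hε => (ergodicZeroSet_Ici_inter_iff _).2
      (tendsto_density_levelSet_of_tendsto_average hg0 hint h hε),
    fun h => tendsto_average_of_tendsto_density_levelSet hg0 hgM hint hL
      fun ε hε => (ergodicZeroSet_Ici_inter_iff _).1 (h ε hε)⟩

/-- Remark 2.2: `u ∈ PSAP_ω(X)` iff for each ε > 0 the set
`C_ε = {t ∈ [0,∞) : ‖u(t+ω)−u(t)‖ ≥ ε}` is an ergodic zero set. -/
theorem psap_iff_ergodicZeroSet {X : Type*} [NormedAddCommGroup X]
    (ω : ℝ) (hω : 0 < ω) (u : ℝ → X)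
    (hcont : ContinuousOn u (Set.Ici 0)) (hbdd : ∃ B, ∀ t ≥ (0:ℝ), ‖u t‖ ≤ B) :
    PSAP ω u ↔
      ∀ ε > 0, ErgodicZeroSet {t : ℝ | 0 ≤ t ∧ ε ≤ ‖u (t + ω) - u t‖} := by
  obtain ⟨B, hB⟩ := hbdd
  have hshift_nonneg (t : ℝ) (ht : 0 ≤ t) : 0 ≤ t + ω := by linarith
  have hshift : ContinuousOn (fun t => u (t + ω)) (Ici 0) :=
    hcont.comp (continuous_add_const ω).continuousOn hshift_nonneg
  refine tendsto_average_iff_ergodicZeroSet (M := B + B) (hshift.sub hcont).norm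
    (fun _ _ => norm_nonneg _) fun t ht => ?_
  calc ‖u (t + ω) - u t‖ ≤ ‖u (t + ω)‖ + ‖u t‖ := norm_sub_le _ _
    _ ≤ B + B := add_le_add (hB _ (hshift_nonneg t ht)) (hB t ht)
end

section
/- Let r > 0 and u ∈ C_b([0,∞),X). Then u ∈ PSAP_{ω,r}(X) if and only if for every ε > 0, lim_{T→∞} (1/T) mes(M_{T,ε}(u)) = 0, where M_{T,ε}(u) = {t ∈ [r,T] : sup_{τ∈[t−r,t]} ‖u(τ+ω)−u(τ)‖ ≥ ε} and mes denotes the Lebesgue measure. -/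
open MeasureTheory Filter Set

/-!
Write `F s` for the supremum of `‖u (τ + ω) - u τ‖` over the window `[s - r, s]`. On `[r, ∞)`
it is continuous (a supremum over a compact window of a continuous function) and bounded by
`2 sup ‖u‖`. Markov's inequality bounds `ε · mes M_{T,ε}` by `∫_r^T F`; conversely
`∫_r^T F ≤ 2 sup ‖u‖ · mes M_{T,ε} + ε (T - r)`, since `F < ε` off `M_{T,ε}`.
-/

open Topology

theorem continuous_biSup_Icc_sub {g : ℝ → ℝ} (hg : Continuous g) (hg0 : ∀ t, 0 ≤ g t) (r : ℝ) :
    Continuous fun s => ⨆ τ ∈ Icc (s - r) s, g τ := by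
  have hsSup (s : ℝ) : (⨆ τ ∈ Icc (s - r) s, g τ) = sSup ((fun t => g (s - t)) '' Icc 0 r) := by
    rw [show (fun t => g (s - t)) = g ∘ (fun t => s - t) from rfl, image_comp,
      image_const_sub_Icc, sub_zero, csSup_image]
    · simpa only [← image_eq_range] using isCompact_Icc.bddAbove_image hg.continuousOn
    · simpa only [Real.sSup_empty] using Real.iSup_nonneg fun _ => hg0 _
  simp_rw [hsSup]
  exact isCompact_Icc.continuous_sSup (by fun_prop)

theorem continuousOn_biSup_Icc_sub_norm_sub {X : Type*} [NormedAddCommGroup X] {u : ℝ → X}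
    {ω : ℝ} (hω : 0 ≤ ω) (hu : ContinuousOn u (Ici 0)) (r : ℝ) :
    ContinuousOn (fun s => ⨆ τ ∈ Icc (s - r) s, ‖u (τ + ω) - u τ‖) (Ici r) := by
  let g : ℝ → ℝ := fun τ => ‖u (max τ 0 + ω) - u (max τ 0)‖
  have hg : Continuous g := by
    have hshift : Continuous fun τ : ℝ => u (max τ 0 + ω) :=
      hu.comp_continuous (by fun_prop) fun τ => add_nonneg (le_max_right τ 0) hω
    have hclamp : Continuous fun τ : ℝ => u (max τ 0) :=
      hu.comp_continuous (by fun_prop) fun τ => le_max_right τ 0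
    exact (hshift.sub hclamp).norm
  refine (continuous_biSup_Icc_sub hg (fun _ => norm_nonneg _) r).continuousOn.congr
    fun s hs => iSup_congr fun τ => iSup_congr fun hτ => ?_
  have hτ0 : 0 ≤ τ := by linarith [hτ.1, mem_Ici.1 hs]
  simp only [g, max_eq_left hτ0]

theorem tendsto_sub_div_self_atTop (a : ℝ) : Tendsto (fun T : ℝ => (T - a) / T) atTop (𝓝 1) := by
  have h : Tendsto (fun T : ℝ => 1 - a / T) atTop (𝓝 (1 - 0)) :=
    tendsto_const_nhds.sub (tendsto_const_nhds.div_atTop tendsto_id)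
  rw [sub_zero] at h
  refine h.congr' ((eventually_ne_atTop 0).mono fun T hT => ?_)
  field_simp

section Superlevel

variable {F : ℝ → ℝ} {a C : ℝ}

theorem mul_measure_superlevel_le_intervalIntegral {T : ℝ} (haT : a ≤ T)
    (hF : IntegrableOn F (Icc a T)) (hF0 : ∀ t ∈ Icc a T, 0 ≤ F t) (ε : ℝ) :
    ε * (volume {t | t ∈ Icc a T ∧ ε ≤ F t}).toReal ≤ ∫ s in a..T, F s := by
  have h := mul_meas_ge_le_integral_of_nonneg
    ((ae_restrict_iff' measurableSet_Icc).2 (ae_of_all _ hF0)) hF ε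
  rw [Measure.real, Measure.restrict_apply' measurableSet_Icc, inter_comm] at h
  rwa [intervalIntegral.integral_of_le haT, ← integral_Icc_eq_integral_Ioc]

theorem intervalIntegral_le_mul_measure_superlevel_add {T ε : ℝ} (haT : a ≤ T)
    (hF : ContinuousOn F (Icc a T)) (hFC : ∀ t ∈ Icc a T, F t ≤ C) (hε : 0 ≤ ε) :
    ∫ s in a..T, F s ≤ C * (volume {t | t ∈ Icc a T ∧ ε ≤ F t}).toReal + ε * (T - a) := by
  set M := {t | t ∈ Icc a T ∧ ε ≤ F t}
  have hM : MeasurableSet M :=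
    (hF.preimage_isClosed_of_isClosed isClosed_Icc isClosed_Ici).measurableSet
  have hMIcc : M ⊆ Icc a T := fun t ht => ht.1
  have hpointwise : ∀ t ∈ Icc a T, F t ≤ M.indicator (fun _ => C) t + ε := by
    intro t ht
    by_cases htM : t ∈ M
    · rw [indicator_of_mem htM]; linarith [hFC t ht]
    · rw [indicator_of_notMem htM, zero_add]
      exact (not_le.1 fun h => htM ⟨ht, h⟩).le
  have hCint : IntegrableOn (M.indicator fun _ => C) (Icc a T) :=
    (integrableOn_const measure_Icc_lt_top.ne).indicator hM
  have hεint : IntegrableOn (fun _ => ε) (Icc a T) := integrableOn_const measure_Icc_lt_top.ne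
  calc ∫ s in a..T, F s = ∫ s in Icc a T, F s := by
        rw [intervalIntegral.integral_of_le haT, integral_Icc_eq_integral_Ioc]
    _ ≤ ∫ s in Icc a T, (M.indicator (fun _ => C) s + ε) :=
        setIntegral_mono_on hF.integrableOn_Icc (hCint.add hεint) measurableSet_Icc hpointwise
    _ = C * (volume M).toReal + ε * (T - a) := by
        rw [integral_add hCint hεint, integral_indicator hM, setIntegral_const, setIntegral_const,
          measureReal_restrict_apply hM, inter_eq_left.2 hMIcc, Real.volume_real_Icc_of_le haT,
          smul_eq_mul, smul_eq_mul, Measure.real, mul_comm, mul_comm (T - a)]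

theorem tendsto_measure_superlevel_div_of_tendsto_average (hF : ContinuousOn F (Ici a))
    (hF0 : ∀ t ∈ Ici a, 0 ≤ F t)
    (h : Tendsto (fun T => (1 / T) * ∫ s in a..T, F s) atTop (𝓝 0)) {ε : ℝ} (hε : 0 < ε) :
    Tendsto (fun T => (volume {t | t ∈ Icc a T ∧ ε ≤ F t}).toReal / T) atTop (𝓝 0) := by
  have hupper : ∀ᶠ T in atTop, (volume {t | t ∈ Icc a T ∧ ε ≤ F t}).toReal / T ≤
      ε⁻¹ * ((1 / T) * ∫ s in a..T, F s) := by
    filter_upwards [eventually_ge_atTop a, eventually_gt_atTop 0] with T haT hT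
    have hMarkov := mul_measure_superlevel_le_intervalIntegral haT
      (hF.mono Icc_subset_Ici_self).integrableOn_Icc (fun t ht => hF0 t ht.1) ε
    rw [← le_div_iff₀' hε] at hMarkov
    calc _ ≤ (∫ s in a..T, F s) / ε / T := by gcongr
      _ = _ := by ring
  have hlower : ∀ᶠ T in atTop, 0 ≤ (volume {t | t ∈ Icc a T ∧ ε ≤ F t}).toReal / T :=
    (eventually_gt_atTop 0).mono fun T hT => by positivity
  simpa using tendsto_of_tendsto_of_tendsto_of_le_of_le' tendsto_const_nhds
    (by simpa using h.const_mul ε⁻¹) hlower hupper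

theorem tendsto_average_of_tendsto_measure_superlevel_div (hF : ContinuousOn F (Ici a))
    (hF0 : ∀ t ∈ Ici a, 0 ≤ F t) (hFC : ∀ t ∈ Ici a, F t ≤ C)
    (h : ∀ ε > 0, Tendsto (fun T => (volume {t | t ∈ Icc a T ∧ ε ≤ F t}).toReal / T) atTop (𝓝 0)) :
    Tendsto (fun T => (1 / T) * ∫ s in a..T, F s) atTop (𝓝 0) := by
  refine tendsto_order.2 ⟨fun δ hδ => ?_, fun δ hδ => ?_⟩
  · filter_upwards [eventually_ge_atTop a, eventually_gt_atTop 0] with T haT hT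
    have : 0 ≤ ∫ s in a..T, F s := intervalIntegral.integral_nonneg haT fun t ht => hF0 t ht.1
    exact hδ.trans_le (by positivity)
  · have hbound : Tendsto (fun T => C * ((volume {t | t ∈ Icc a T ∧ δ / 2 ≤ F t}).toReal / T) +
        δ / 2 * ((T - a) / T)) atTop (𝓝 (δ / 2)) := by
      simpa using ((h (δ / 2) (by positivity)).const_mul C).add
        ((tendsto_sub_div_self_atTop a).const_mul (δ / 2))
    filter_upwards [eventually_ge_atTop a, eventually_gt_atTop 0,
      hbound.eventually_lt_const (by linarith : δ / 2 < δ)] with T haT hT hlt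
    refine lt_of_le_of_lt ?_ hlt
    have := intervalIntegral_le_mul_measure_superlevel_add haT (hF.mono Icc_subset_Ici_self)
      (fun t ht => hFC t ht.1) (by positivity : 0 ≤ δ / 2)
    calc (1 / T) * ∫ s in a..T, F s
        ≤ (1 / T) * (C * (volume {t | t ∈ Icc a T ∧ δ / 2 ≤ F t}).toReal + δ / 2 * (T - a)) := by
          gcongr
      _ = _ := by ring

theorem tendsto_average_iff_forall_tendsto_measure_superlevel_div (hF : ContinuousOn F (Ici a))
    (hF0 : ∀ t ∈ Ici a, 0 ≤ F t) (hFC : ∀ t ∈ Ici a, F t ≤ C) :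
    Tendsto (fun T => (1 / T) * ∫ s in a..T, F s) atTop (𝓝 0) ↔
      ∀ ε > 0, Tendsto (fun T => (volume {t | t ∈ Icc a T ∧ ε ≤ F t}).toReal / T) atTop (𝓝 0) :=
  ⟨fun h _ hε => tendsto_measure_superlevel_div_of_tendsto_average hF hF0 h hε,
    tendsto_average_of_tendsto_measure_superlevel_div hF hF0 hFC⟩

end Superlevel

theorem psapClass_iff_measure_general {X : Type*} [NormedAddCommGroup X]
    (r ω : ℝ) (hω : 0 < ω) (u : ℝ → X)
    (hcont : ContinuousOn u (Set.Ici 0)) (hbdd : ∃ B, ∀ t ≥ (0:ℝ), ‖u t‖ ≤ B) :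
    PSAPclass ω r u ↔
      ∀ ε > 0,
        Tendsto (fun T : ℝ =>
            (volume {t : ℝ | t ∈ Set.Icc r T ∧
              ε ≤ ⨆ τ ∈ Set.Icc (t - r) t, ‖u (τ + ω) - u τ‖}).toReal / T)
          atTop (nhds 0) := by
  obtain ⟨B, hB⟩ := hbdd
  have hB0 : 0 ≤ B + B := by linarith [(norm_nonneg (u 0)).trans (hB 0 le_rfl)]
  refine tendsto_average_iff_forall_tendsto_measure_superlevel_div
    (continuousOn_biSup_Icc_sub_norm_sub hω.le hcont r)
    (fun s _ => Real.iSup_nonneg fun τ => Real.iSup_nonneg fun _ => norm_nonneg _)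
    (fun s hs => Real.iSup_le (fun τ => Real.iSup_le (fun hτ => ?_) hB0) hB0)
  have hτ0 : 0 ≤ τ := by linarith [hτ.1, mem_Ici.1 hs]
  exact norm_sub_le_of_le (hB _ (add_nonneg hτ0 hω.le)) (hB τ hτ0)

/-- Remark 2.3: `u ∈ PSAP_{ω,r}(X)` iff for every ε > 0,
`(1/T) mes(M_{T,ε}(u)) → 0` where
`M_{T,ε}(u) = {t ∈ [r,T] : sup_{τ∈[t−r,t]} ‖u(τ+ω)−u(τ)‖ ≥ ε}`. -/
theorem psapClass_iff_measure {X : Type*} [NormedAddCommGroup X]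
    (r ω : ℝ) (hr : 0 < r) (hω : 0 < ω) (u : ℝ → X)
    (hcont : ContinuousOn u (Set.Ici 0)) (hbdd : ∃ B, ∀ t ≥ (0:ℝ), ‖u t‖ ≤ B) :
    PSAPclass ω r u ↔
      ∀ ε > 0,
        Tendsto (fun T : ℝ =>
            (volume {t : ℝ | t ∈ Set.Icc r T ∧
              ε ≤ ⨆ τ ∈ Set.Icc (t - r) t, ‖u (τ + ω) - u τ‖}).toReal / T)
          atTop (nhds 0) :=
  psapClass_iff_measure_general r ω hω u hcont hbdd
end

section
/- The set PSAP_ω(X) is a closed subspace of C_b([0,∞),X) with respect to the norm of uniform convergence; in particular, if a sequence (f_n) in PSAP_ω(X) converges uniformly on [0,∞) to f ∈ C_b([0,∞),X), then f ∈ PSAP_ω(X). -/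
open MeasureTheory Filter Set

/-- `PSAP_ω(X)` is closed in `C_b([0,∞),X)` under uniform convergence. -/
theorem psap_closed {X : Type*} [NormedAddCommGroup X]
    (ω : ℝ) (hω : 0 < ω)
    (f : ℕ → ℝ → X) (g : ℝ → X)
    (hfcont : ∀ n, ContinuousOn (f n) (Set.Ici 0))
    (hfbdd : ∀ n, ∃ B, ∀ t ≥ (0:ℝ), ‖f n t‖ ≤ B)
    (hfP : ∀ n, PSAP ω (f n))
    (hgcont : ContinuousOn g (Set.Ici 0))
    (hgbdd : ∃ B, ∀ t ≥ (0:ℝ), ‖g t‖ ≤ B)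
    (hconv : TendstoUniformlyOn f g atTop (Set.Ici 0)) :
    PSAP ω g := by
  have key : ∀ (h : ℝ → X), ContinuousOn h (Set.Ici 0) → ∀ t : ℝ, 0 ≤ t →
      IntervalIntegrable (fun s => ‖h (s + ω) - h s‖) volume 0 t := by
    intro h hc t ht
    apply ContinuousOn.intervalIntegrable
    rw [Set.uIcc_of_le ht]
    apply ContinuousOn.norm
    apply ContinuousOn.sub
    · exact hc.comp ((continuous_id.add continuous_const).continuousOn)
        (fun s hs => by simp only [Set.mem_Ici]; have := hs.1; linarith)
    · exact hc.mono (Set.Icc_subset_Ici_self)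
  unfold PSAP at hfP ⊢
  rw [Metric.tendsto_nhds]
  intro ε hε
  obtain ⟨n, hn⟩ : ∃ n, ∀ x ∈ Set.Ici (0:ℝ), dist (g x) (f n x) < ε / 4 :=
    (Metric.tendstoUniformlyOn_iff.mp hconv (ε / 4) (by linarith)).exists
  have hfn := Metric.tendsto_nhds.mp (hfP n) (ε / 4) (by linarith)
  filter_upwards [hfn, eventually_gt_atTop (0:ℝ)] with t hfnt ht
  have ht' : (0:ℝ) ≤ t := le_of_lt ht
  have hnonneg : (0:ℝ) ≤ (1 / t) * ∫ s in (0:ℝ)..t, ‖g (s + ω) - g s‖ := by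
    apply mul_nonneg (by positivity)
    exact intervalIntegral.integral_nonneg ht' (fun s _ => norm_nonneg _)
  rw [Real.dist_eq, sub_zero, abs_of_nonneg hnonneg]
  -- pointwise bound
  have hpt : ∀ s ∈ Set.Icc (0:ℝ) t,
      ‖g (s + ω) - g s‖ ≤ ‖f n (s + ω) - f n s‖ + ε / 2 := by
    intro s hs
    have hs0 : (0:ℝ) ≤ s := hs.1
    have hsw : (0:ℝ) ≤ s + ω := by linarith
    have h1 := hn (s + ω) hsw
    have h2 := hn s hs0
    rw [dist_eq_norm] at h1 h2
    calc ‖g (s + ω) - g s‖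
        ≤ ‖g (s + ω) - f n (s + ω)‖ + ‖f n (s + ω) - f n s‖ + ‖f n s - g s‖ := by
          have := norm_add₃_le (a := g (s + ω) - f n (s + ω))
            (b := f n (s + ω) - f n s) (c := f n s - g s)
          simpa using this
      _ ≤ ε / 4 + ‖f n (s + ω) - f n s‖ + ε / 4 := by
          have h2' : ‖f n s - g s‖ < ε / 4 := by rwa [norm_sub_rev] at h2
          linarith [h1.le, h2'.le]
      _ = ‖f n (s + ω) - f n s‖ + ε / 2 := by ring
  have hintg := key g hgcont t ht'
  have hintf := key (f n) (hfcont n) t ht'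
  have hintf' : IntervalIntegrable (fun s => ‖f n (s + ω) - f n s‖ + ε / 2) volume 0 t :=
    hintf.add (intervalIntegrable_const)
  have hmono : (∫ s in (0:ℝ)..t, ‖g (s + ω) - g s‖)
      ≤ ∫ s in (0:ℝ)..t, (‖f n (s + ω) - f n s‖ + ε / 2) :=
    intervalIntegral.integral_mono_on ht' hintg hintf' hpt
  have hsplit : (∫ s in (0:ℝ)..t, (‖f n (s + ω) - f n s‖ + ε / 2))
      = (∫ s in (0:ℝ)..t, ‖f n (s + ω) - f n s‖) + ε / 2 * t := by
    rw [intervalIntegral.integral_add hintf intervalIntegrable_const,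
      intervalIntegral.integral_const, smul_eq_mul, sub_zero, mul_comm]
  have hfn' : (1 / t) * ∫ s in (0:ℝ)..t, ‖f n (s + ω) - f n s‖ < ε / 4 := by
    rw [Real.dist_eq, sub_zero] at hfnt
    exact lt_of_le_of_lt (le_abs_self _) hfnt
  have h1t : (0:ℝ) < 1 / t := by positivity
  calc (1 / t) * ∫ s in (0:ℝ)..t, ‖g (s + ω) - g s‖
      ≤ (1 / t) * ((∫ s in (0:ℝ)..t, ‖f n (s + ω) - f n s‖) + ε / 2 * t) := by
        rw [← hsplit]; exact mul_le_mul_of_nonneg_left hmono h1t.le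
    _ = (1 / t) * (∫ s in (0:ℝ)..t, ‖f n (s + ω) - f n s‖) + ε / 2 := by
        rw [mul_add]
        congr 1
        field_simp
    _ < ε / 4 + ε / 2 := by linarith
    _ < ε := by linarith
end
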